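/- Let g(x,y,ρ) = 2∫ sgn(x-u)·φ(u)·(Φ((y-ρu)/√(1-ρ²)) - Φ(y)) du, where φ and Φ are the standard normal density and CDF and -1 < ρ < 1. Then |g(x,y,ρ)| ≤ (2/π + 1)·|ρ| for all x, y. -/

import Mathlib

/-!
Write `σ = √(1 - ρ²)` and split `Φ((y - ρu)/σ) - Φ(y)` at `Φ(y - ρu)`. The second piece is at
most `|ρu|/√(2π)` because `φ ≤ 1/√(2π)`. For the first, `|Φ(w/σ) - Φ(w)| ≤ |ρ|/2`: if
`e^{-w²/2} ≤ |ρ|` the Gaussian tail bound `Φ(-|w|) ≤ e^{-w²/2}/2` suffices, and otherwise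
`|w| e^{-w²/2} < σ`, so the mean value bound `(1/σ - 1)|w|φ(w)` is at most `ρ²/√(2π)`.
Integrating against `φ(u)`, with `∫ φ = 1` and `∫ |u| φ(u) du = 2/√(2π)`, gives
`|g| ≤ |ρ| + 4|ρ|/(2π)`.
-/

open MeasureTheory Real

noncomputable def stdphi (x : ℝ) : ℝ := Real.exp (-x ^ 2 / 2) / Real.sqrt (2 * Real.pi)

noncomputable def stdPhi (x : ℝ) : ℝ := ∫ t in Set.Iic x, stdphi t

noncomputable def g (x y ρ : ℝ) : ℝ :=
  2 * ∫ u, Real.sign (x - u) * stdphi u *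
      (stdPhi ((y - ρ * u) / Real.sqrt (1 - ρ ^ 2)) - stdPhi y)

open Set ProbabilityTheory

lemma stdphi_eq_gaussianPDFReal : stdphi = gaussianPDFReal 0 1 := by
  ext x
  simp [stdphi, gaussianPDFReal, div_eq_inv_mul]

lemma stdphi_pos (x : ℝ) : 0 < stdphi x := by
  unfold stdphi; positivity

lemma stdphi_le_stdphi {a b : ℝ} (h : a ^ 2 ≤ b ^ 2) : stdphi b ≤ stdphi a := by
  unfold stdphi
  gcongr

lemma stdphi_le (x : ℝ) : stdphi x ≤ 1 / √(2 * π) := by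
  simpa [stdphi] using stdphi_le_stdphi (a := 0) (b := x) (by simpa using sq_nonneg x)

lemma stdphi_add_le {t w : ℝ} (h : 0 ≤ t * w) :
    stdphi (t + w) ≤ exp (-w ^ 2 / 2) * stdphi t := by
  unfold stdphi
  rw [← mul_div_assoc, ← exp_add]
  gcongr
  nlinarith

lemma integrable_stdphi : Integrable stdphi :=
  stdphi_eq_gaussianPDFReal ▸ integrable_gaussianPDFReal 0 1

lemma integral_stdphi : ∫ x, stdphi x = 1 :=
  stdphi_eq_gaussianPDFReal ▸ integral_gaussianPDFReal_eq_one 0 one_ne_zero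

lemma setIntegral_Iic_comp_add_right (f : ℝ → ℝ) (a c : ℝ) :
    ∫ t in Iic a, f (t + c) = ∫ t in Iic (a + c), f t := by
  have h := (measurePreserving_add_right volume c).setIntegral_preimage_emb
    (measurableEmbedding_addRight c) f (Iic (a + c))
  simpa using h

lemma stdPhi_sub_stdPhi (a b : ℝ) : stdPhi b - stdPhi a = ∫ t in a..b, stdphi t := by
  rw [stdPhi, stdPhi, intervalIntegral.integral_Iic_sub_Iic integrable_stdphi.integrableOn
    integrable_stdphi.integrableOn]

lemma stdPhi_nonneg (x : ℝ) : 0 ≤ stdPhi x :=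
  setIntegral_nonneg measurableSet_Iic fun t _ => (stdphi_pos t).le

lemma stdPhi_mono : Monotone stdPhi := fun a b hab => by
  have := stdPhi_sub_stdPhi a b
  have := intervalIntegral.integral_nonneg (μ := volume) hab fun t _ => (stdphi_pos t).le
  linarith

lemma stdPhi_neg (x : ℝ) : stdPhi (-x) = 1 - stdPhi x := by
  have h := intervalIntegral.integral_Iic_add_Ioi (b := x) integrable_stdphi.integrableOn
    integrable_stdphi.integrableOn
  rw [integral_stdphi] at h
  have hsymm : stdPhi (-x) = ∫ t in Ioi x, stdphi t := by
    rw [stdPhi, ← integral_comp_neg_Ioi]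
    simp [stdphi]
  rw [hsymm, stdPhi]
  linarith

lemma stdPhi_zero : stdPhi 0 = 1 / 2 := by
  have := stdPhi_neg 0
  rw [neg_zero] at this
  linarith

lemma stdPhi_le_of_nonpos {w : ℝ} (hw : w ≤ 0) : stdPhi w ≤ exp (-w ^ 2 / 2) / 2 := by
  calc stdPhi w = ∫ t in Iic 0, stdphi (t + w) := by
        rw [setIntegral_Iic_comp_add_right, zero_add, stdPhi]
    _ ≤ ∫ t in Iic 0, exp (-w ^ 2 / 2) * stdphi t := by
        refine setIntegral_mono_on (integrable_stdphi.comp_add_right w).integrableOn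
          (integrable_stdphi.const_mul _).integrableOn measurableSet_Iic fun t ht => ?_
        exact stdphi_add_le (mul_nonneg_of_nonpos_of_nonpos ht hw)
    _ = exp (-w ^ 2 / 2) / 2 := by
        rw [integral_const_mul, ← stdPhi, stdPhi_zero]
        ring

lemma abs_stdPhi_sub_le_of_stdphi_le {a b M : ℝ} (hM : ∀ t ∈ uIoc a b, stdphi t ≤ M) :
    |stdPhi b - stdPhi a| ≤ M * |b - a| := by
  rw [stdPhi_sub_stdPhi, ← Real.norm_eq_abs]
  exact intervalIntegral.norm_integral_le_of_norm_le_const fun t ht => by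
    rw [Real.norm_of_nonneg (stdphi_pos t).le]
    exact hM t ht

lemma abs_stdPhi_sub_le (a b : ℝ) : |stdPhi b - stdPhi a| ≤ |b - a| / √(2 * π) := by
  have := abs_stdPhi_sub_le_of_stdphi_le (a := a) (b := b) fun t _ => stdphi_le t
  rwa [one_div_mul_eq_div] at this

lemma abs_stdPhi_mul_sub_le_mul {c : ℝ} (hc : 1 ≤ c) (w : ℝ) :
    |stdPhi (c * w) - stdPhi w| ≤ (c - 1) * |w| * stdphi w := by
  have hM : ∀ t ∈ uIoc w (c * w), stdphi t ≤ stdphi w := fun t ht => by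
    apply stdphi_le_stdphi
    rcases le_total 0 w with hw | hw
    · rw [uIoc_of_le (by nlinarith)] at ht
      nlinarith [ht.1, ht.2]
    · rw [uIoc_of_ge (by nlinarith)] at ht
      nlinarith [ht.1, ht.2]
  calc |stdPhi (c * w) - stdPhi w| ≤ stdphi w * |c * w - w| :=
        abs_stdPhi_sub_le_of_stdphi_le hM
    _ = (c - 1) * |w| * stdphi w := by
        rw [← sub_one_mul, abs_mul, abs_of_nonneg (by linarith : 0 ≤ c - 1)]
        ring

lemma abs_stdPhi_mul_sub_le_exp {c : ℝ} (hc : 1 ≤ c) (w : ℝ) :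
    |stdPhi (c * w) - stdPhi w| ≤ exp (-w ^ 2 / 2) / 2 := by
  wlog hw : w ≤ 0 generalizing w
  · have := this (-w) (by linarith)
    rwa [mul_neg, stdPhi_neg, stdPhi_neg, neg_sq, ← abs_neg, neg_sub, sub_sub_sub_cancel_left]
      at this
  have hmono : stdPhi (c * w) ≤ stdPhi w := stdPhi_mono (by nlinarith)
  rw [abs_of_nonpos (by linarith)]
  linarith [stdPhi_nonneg (c * w), stdPhi_le_of_nonpos hw]

lemma abs_stdPhi_div_sqrt_sub_le {ρ : ℝ} (hρ : |ρ| < 1) (w : ℝ) :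
    |stdPhi (w / √(1 - ρ ^ 2)) - stdPhi w| ≤ |ρ| / 2 := by
  have hρ2 : ρ ^ 2 < 1 := by rw [← sq_abs]; nlinarith [abs_nonneg ρ]
  set σ := √(1 - ρ ^ 2)
  have hσpos : 0 < σ := sqrt_pos.2 (by linarith)
  have hσsq : σ ^ 2 = 1 - ρ ^ 2 := sq_sqrt (by linarith)
  have hσle : σ ≤ 1 := by nlinarith
  have hc : 1 ≤ σ⁻¹ := one_le_inv_iff₀.2 ⟨hσpos, hσle⟩
  rw [div_eq_inv_mul]
  set E := exp (-w ^ 2 / 2) with hE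
  by_cases hEρ : E ≤ |ρ|
  · linarith [abs_stdPhi_mul_sub_le_exp hc w]
  push Not at hEρ
  have hwE : |w| * E < σ := by
    have hE2 : E ^ 2 * exp (w ^ 2) = 1 := by rw [hE, ← exp_nat_mul, ← exp_add]; ring_nf; simp
    -- `x e^{-x} ≤ 1 - e^{-x}` at `x = w²`
    have : w ^ 2 * E ^ 2 ≤ 1 - E ^ 2 := by nlinarith [add_one_le_exp (w ^ 2)]
    have : (|w| * E) ^ 2 < σ ^ 2 := by
      rw [mul_pow, sq_abs, hσsq, ← sq_abs ρ]
      nlinarith [mul_self_lt_mul_self (abs_nonneg ρ) hEρ]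
    exact lt_of_pow_lt_pow_left₀ 2 hσpos.le this
  have hpi : 2 ≤ √(2 * π) := by
    rw [le_sqrt' two_pos]; nlinarith [pi_gt_three]
  calc |stdPhi (σ⁻¹ * w) - stdPhi w| ≤ (σ⁻¹ - 1) * |w| * stdphi w :=
        abs_stdPhi_mul_sub_le_mul hc w
    _ = (1 - σ) * (|w| * E / σ) / √(2 * π) := by
        rw [stdphi, ← hE]; field_simp
    _ ≤ ρ ^ 2 * 1 / 2 := by
        gcongr
        · nlinarith
        · exact (div_le_one hσpos).2 hwE.le
    _ ≤ |ρ| / 2 := by rw [← sq_abs]; nlinarith [abs_nonneg ρ]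

lemma abs_stdPhi_sub_mul_div_sqrt_sub_le {ρ : ℝ} (hρ : |ρ| < 1) (y u : ℝ) :
    |stdPhi ((y - ρ * u) / √(1 - ρ ^ 2)) - stdPhi y| ≤ |ρ| / 2 + |ρ| * |u| / √(2 * π) :=
  calc |stdPhi ((y - ρ * u) / √(1 - ρ ^ 2)) - stdPhi y|
      ≤ |stdPhi ((y - ρ * u) / √(1 - ρ ^ 2)) - stdPhi (y - ρ * u)|
        + |stdPhi (y - ρ * u) - stdPhi y| := abs_sub_le _ _ _
    _ ≤ |ρ| / 2 + |y - ρ * u - y| / √(2 * π) :=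
        add_le_add (abs_stdPhi_div_sqrt_sub_le hρ _) (abs_stdPhi_sub_le _ _)
    _ = |ρ| / 2 + |ρ| * |u| / √(2 * π) := by
        rw [sub_sub_cancel_left, abs_neg, abs_mul]

lemma integrable_abs_mul_stdphi : Integrable fun u => |u| * stdphi u := by
  refine ((integrable_mul_exp_neg_mul_sq (b := 1 / 2) (by norm_num)).abs.div_const
    √(2 * π)).congr (.of_forall fun u => ?_)
  simp only [stdphi, abs_mul, abs_of_pos (exp_pos _)]
  ring_nf

lemma integral_abs_mul_stdphi : ∫ u, |u| * stdphi u = 2 / √(2 * π) := by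
  have h := integral_rpow_mul_exp_neg_mul_rpow two_pos (q := 1) (by norm_num)
    (one_half_pos (α := ℝ))
  norm_num at h
  have hsymm : (fun u => |u| * stdphi u) = fun u => |u| * stdphi |u| := by
    ext u; simp [stdphi]
  rw [hsymm, integral_comp_abs (f := fun u => u * stdphi u)]
  simp only [stdphi, mul_div_assoc']
  rw [integral_div, show (fun u : ℝ => u * exp (-u ^ 2 / 2)) = fun u => u * exp (-(1 / 2 * u ^ 2))
    by ext; ring_nf, h]
  ring

lemma abs_sign_mul_stdphi_mul_sub_le {ρ : ℝ} (hρ : |ρ| < 1) (x y u : ℝ) :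
    |sign (x - u) * stdphi u * (stdPhi ((y - ρ * u) / √(1 - ρ ^ 2)) - stdPhi y)|
      ≤ |ρ| / 2 * stdphi u + |ρ| / √(2 * π) * (|u| * stdphi u) := by
  have hsign : |sign (x - u)| ≤ 1 := by
    rcases sign_apply_eq (x - u) with h | h | h <;> simp [h]
  have hphi := (stdphi_pos u).le
  rw [abs_mul, abs_mul, abs_of_nonneg hphi]
  calc |sign (x - u)| * stdphi u * |stdPhi ((y - ρ * u) / √(1 - ρ ^ 2)) - stdPhi y|
      ≤ 1 * stdphi u * (|ρ| / 2 + |ρ| * |u| / √(2 * π)) := by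
        gcongr
        exact abs_stdPhi_sub_mul_div_sqrt_sub_le hρ y u
    _ = |ρ| / 2 * stdphi u + |ρ| / √(2 * π) * (|u| * stdphi u) := by ring

theorem stmt13 (ρ : ℝ) (h1 : -1 < ρ) (h2 : ρ < 1) (x y : ℝ) :
    |g x y ρ| ≤ (2 / Real.pi + 1) * |ρ| := by
  have hρ : |ρ| < 1 := abs_lt.2 ⟨h1, h2⟩
  have hint := (integrable_stdphi.const_mul (|ρ| / 2)).add
    (integrable_abs_mul_stdphi.const_mul (|ρ| / √(2 * π)))
  calc |g x y ρ| ≤ 2 * ∫ u, (|ρ| / 2 * stdphi u + |ρ| / √(2 * π) * (|u| * stdphi u)) := by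
        rw [g, abs_mul, abs_two, ← Real.norm_eq_abs]
        gcongr
        exact norm_integral_le_of_norm_le hint
          (.of_forall (abs_sign_mul_stdphi_mul_sub_le hρ x y))
    _ = (2 / π + 1) * |ρ| := by
        rw [integral_add (integrable_stdphi.const_mul _) (integrable_abs_mul_stdphi.const_mul _),
          integral_const_mul, integral_const_mul, integral_stdphi, integral_abs_mul_stdphi]
        field_simp
        rw [sq_sqrt (by positivity)]
        ring
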